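/- arXiv:2007.02556 — 2 statements merged into one kernel-verified Lean document; each statement's English description precedes it below -/
import Mathlib

section
/- Let p ≠ q be points on the hyperboloid H^d, and define P(v) = v + (⟨v,q⟩_M / (1 - ⟨p,q⟩_M)) · (p + q) for v tangent to H^d at p (i.e., ⟨p,v⟩_M = 0). Then P is an isometry with respect to the Minkowski form: for all u, v tangent at p, ⟨P(u), P(v)⟩_M = ⟨u,v⟩_M. -/
open Real

/-- The Minkowski bilinear form on `ℝ^{d+1}`. -/
noncomputable def mink {d : ℕ} (x y : Fin (d + 1) → ℝ) : ℝ :=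
  -(x 0 * y 0) + ∑ k : Fin d, x k.succ * y k.succ

/-- The hyperboloid model `H^d`. -/
def Hyp (d : ℕ) : Set (Fin (d + 1) → ℝ) := {x | mink x x = -1 ∧ 0 < x 0}

lemma mink_symm {d : ℕ} (x y : Fin (d + 1) → ℝ) : mink x y = mink y x := by
  simp [mink, mul_comm]

lemma mink_add_left {d : ℕ} (x y z : Fin (d + 1) → ℝ) :
    mink (x + y) z = mink x z + mink y z := by
  simp [mink, add_mul, Finset.sum_add_distrib]; ring

lemma mink_add_right {d : ℕ} (x y z : Fin (d + 1) → ℝ) :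
    mink x (y + z) = mink x y + mink x z := by
  rw [mink_symm, mink_add_left, mink_symm y, mink_symm z]

lemma mink_smul_left {d : ℕ} (c : ℝ) (x y : Fin (d + 1) → ℝ) :
    mink (c • x) y = c * mink x y := by
  simp [mink, Finset.mul_sum, mul_add]; ring

lemma mink_smul_right {d : ℕ} (c : ℝ) (x y : Fin (d + 1) → ℝ) :
    mink x (c • y) = c * mink x y := by
  rw [mink_symm, mink_smul_left, mink_symm]

lemma mink_le_neg_one {d : ℕ} {p q : Fin (d + 1) → ℝ}
    (hp : p ∈ Hyp d) (hq : q ∈ Hyp d) : mink p q ≤ -1 := by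
  obtain ⟨hp1, hp0⟩ := hp
  obtain ⟨hq1, hq0⟩ := hq
  set a := ∑ k : Fin d, p k.succ * p k.succ with ha
  set b := ∑ k : Fin d, q k.succ * q k.succ with hb
  set S := ∑ k : Fin d, p k.succ * q k.succ with hS
  have hpa : p 0 * p 0 = 1 + a := by
    have := hp1; simp only [mink] at this; linarith
  have hqb : q 0 * q 0 = 1 + b := by
    have := hq1; simp only [mink] at this; linarith
  have hCS : S * S ≤ a * b := by
    have h := Finset.sum_mul_sq_le_sq_mul_sq Finset.univ
      (fun k : Fin d => p k.succ) (fun k : Fin d => q k.succ)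
    simpa only [pow_two, ha, hb, hS] using h
  have hanon : 0 ≤ a := Finset.sum_nonneg fun k _ => mul_self_nonneg _
  have hbnon : 0 ≤ b := Finset.sum_nonneg fun k _ => mul_self_nonneg _
  have : S + 1 ≤ p 0 * q 0 := by
    rcases le_or_gt (S + 1) 0 with h | h
    · nlinarith
    · have h2S : 2 * S ≤ a + b := by nlinarith [sq_nonneg (a - b)]
      nlinarith [mul_pos hp0 hq0, sq_nonneg (p 0 * q 0 - (S + 1))]
  simp only [mink]
  linarith

theorem parallel_transport_isometry {d : ℕ} (p q u v : Fin (d + 1) → ℝ)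
    (hp : p ∈ Hyp d) (hq : q ∈ Hyp d) (hpq : p ≠ q)
    (hpu : mink p u = 0) (hpv : mink p v = 0) :
    mink (u + (mink u q / (1 - mink p q)) • (p + q))
         (v + (mink v q / (1 - mink p q)) • (p + q)) = mink u v := by
  have hle := mink_le_neg_one hp hq
  have hne : 1 - mink p q ≠ 0 := by linarith
  have hup : mink u p = 0 := by rw [mink_symm]; exact hpu
  have hvp : mink v p = 0 := by rw [mink_symm]; exact hpv
  have hpp : mink p p = -1 := hp.1
  have hqq : mink q q = -1 := hq.1
  have hqp : mink q p = mink p q := mink_symm q p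
  have hqu : mink q u = mink u q := mink_symm q u
  have hqv : mink q v = mink v q := mink_symm q v
  simp only [mink_add_left, mink_add_right, mink_smul_left, mink_smul_right,
    hup, hvp, hpu, hpv, hpp, hqq, hqp, hqu, hqv]
  field_simp
  ring
end

section
/- Let x, y ∈ ℝ^{d+1} with ⟨x,x⟩_M = ⟨y,y⟩_M = -1 (both on the hyperboloid), and let v ∈ ℝ^{d+1} satisfy ⟨x,v⟩_M = 0. Then |⟨y,v⟩_M / (1 - ⟨x,y⟩_M)| ≤ sqrt(⟨v,v⟩_M). -/
open Real

lemma mink_add_smul_right {d : ℕ} (a b e : Fin (d + 1) → ℝ) (c : ℝ) :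
    mink a (b + c • e) = mink a b + c * mink a e := by
  simp only [mink, Pi.add_apply, Pi.smul_apply, smul_eq_mul]
  rw [show (∑ k : Fin d, a k.succ * (b k.succ + c * e k.succ)) =
      ∑ k : Fin d, (a k.succ * b k.succ + c * (a k.succ * e k.succ)) from
    Finset.sum_congr rfl (fun k _ => by ring)]
  rw [Finset.sum_add_distrib, ← Finset.mul_sum]
  ring

lemma mink_expand {d : ℕ} (a b : Fin (d + 1) → ℝ) (t : ℝ) :
    mink (a + t • b) (a + t • b) = mink a a + 2 * t * mink a b + t ^ 2 * mink b b := by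
  simp only [mink, Pi.add_apply, Pi.smul_apply, smul_eq_mul]
  rw [show (∑ k : Fin d, (a k.succ + t * b k.succ) * (a k.succ + t * b k.succ)) =
      ∑ k : Fin d, (a k.succ * a k.succ + 2 * t * (a k.succ * b k.succ)
        + t ^ 2 * (b k.succ * b k.succ)) from
    Finset.sum_congr rfl (fun k _ => by ring)]
  rw [Finset.sum_add_distrib, Finset.sum_add_distrib, ← Finset.mul_sum, ← Finset.mul_sum]
  ring

/-- The Minkowski form is nonnegative on the tangent space at a hyperboloid point. -/
lemma mink_tangent_nonneg {d : ℕ} (x w : Fin (d + 1) → ℝ)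
    (hx : mink x x = -1) (hxw : mink x w = 0) : 0 ≤ mink w w := by
  simp only [mink] at *
  have hcs := Finset.sum_mul_sq_le_sq_mul_sq Finset.univ
    (fun k : Fin d => x k.succ) (fun k : Fin d => w k.succ)
  have h1 : (∑ k : Fin d, x k.succ * w k.succ) = x 0 * w 0 := by linarith
  have h2 : (∑ k : Fin d, x k.succ ^ 2) = x 0 * x 0 - 1 := by
    have : (∑ k : Fin d, x k.succ ^ 2) = ∑ k : Fin d, x k.succ * x k.succ := by
      refine Finset.sum_congr rfl fun k _ => pow_two _
    linarith
  have h3 : (∑ k : Fin d, w k.succ ^ 2) = ∑ k : Fin d, w k.succ * w k.succ := by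
    refine Finset.sum_congr rfl fun k _ => pow_two _
  rw [h1, h2, h3] at hcs
  have hw2 : 0 ≤ ∑ k : Fin d, w k.succ * w k.succ :=
    Finset.sum_nonneg fun k _ => mul_self_nonneg _
  have hxs : 0 ≤ ∑ k : Fin d, x k.succ * x k.succ :=
    Finset.sum_nonneg fun k _ => mul_self_nonneg _
  have h4 : 0 ≤ x 0 * x 0 - 1 := by linarith
  nlinarith [hcs, hw2, h4]

lemma mink_xy_le {d : ℕ} (x y : Fin (d + 1) → ℝ)
    (hx : mink x x = -1) (hy : mink y y = -1) (hx0 : 0 < x 0) (hy0 : 0 < y 0) :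
    mink x y ≤ -1 := by
  simp only [mink] at *
  have hcs := Finset.sum_mul_sq_le_sq_mul_sq Finset.univ
    (fun k : Fin d => x k.succ) (fun k : Fin d => y k.succ)
  have h2 : (∑ k : Fin d, x k.succ ^ 2) = x 0 * x 0 - 1 := by
    have : (∑ k : Fin d, x k.succ ^ 2) = ∑ k : Fin d, x k.succ * x k.succ := by
      refine Finset.sum_congr rfl fun k _ => pow_two _
    linarith
  have h3 : (∑ k : Fin d, y k.succ ^ 2) = y 0 * y 0 - 1 := by
    have : (∑ k : Fin d, y k.succ ^ 2) = ∑ k : Fin d, y k.succ * y k.succ := by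
      refine Finset.sum_congr rfl fun k _ => pow_two _
    linarith
  rw [h2, h3] at hcs
  have hxs : 0 ≤ ∑ k : Fin d, x k.succ * x k.succ :=
    Finset.sum_nonneg fun k _ => mul_self_nonneg _
  have hys : 0 ≤ ∑ k : Fin d, y k.succ * y k.succ :=
    Finset.sum_nonneg fun k _ => mul_self_nonneg _
  have hx1 : 1 ≤ x 0 := by nlinarith
  have hy1 : 1 ≤ y 0 := by nlinarith
  -- goal: -(x0*y0) + S ≤ -1, i.e. S ≤ x0*y0 - 1
  have hq : 0 ≤ x 0 * y 0 - 1 := by nlinarith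
  have hq2 : (x 0 * x 0 - 1) * (y 0 * y 0 - 1) ≤ (x 0 * y 0 - 1) ^ 2 := by
    nlinarith [sq_nonneg (x 0 - y 0)]
  nlinarith [hcs, hq, hq2]

theorem mink_transport_coefficient_bound {d : ℕ} (x y v : Fin (d + 1) → ℝ)
    (hx : mink x x = -1) (hy : mink y y = -1) (hx0 : 0 < x 0) (hy0 : 0 < y 0)
    (hxv : mink x v = 0) :
    |mink y v / (1 - mink x y)| ≤ Real.sqrt (mink v v) := by
  set c : ℝ := mink x y with hc
  have hc1 : c ≤ -1 := mink_xy_le x y hx hy hx0 hy0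
  set u : Fin (d + 1) → ℝ := y + c • x with hu
  have hxu : mink x u = 0 := by
    rw [hu, mink_add_smul_right, hx]; ring_nf; linarith [hc]
  have hxcomm : mink y x = mink x y := by
    simp only [mink, mul_comm]
  have huu : mink u u = c ^ 2 - 1 := by
    rw [hu, mink_expand]
    have hyx : mink y x = c := hxcomm
    rw [hy, hyx, hx]; ring
  have huv : mink u v = mink y v := by
    have : mink v u = mink v y + c * mink v x := by
      rw [hu, mink_add_smul_right]
    have e1 : mink v u = mink u v := by simp only [mink, mul_comm]
    have e2 : mink v y = mink y v := by simp only [mink, mul_comm]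
    have e3 : mink v x = mink x v := by simp only [mink, mul_comm]
    rw [e1, e2, e3, hxv] at this
    linarith
  -- quadratic nonnegativity
  have hquad : ∀ t : ℝ, 0 ≤ mink v v * (t * t) + (2 * mink u v) * t + mink u u := by
    intro t
    have htang : mink x (u + t • v) = 0 := by
      rw [mink_add_smul_right, hxu, hxv]; ring
    have h0 := mink_tangent_nonneg x (u + t • v) hx htang
    rw [mink_expand] at h0
    nlinarith [h0]
  have hdisc := discrim_le_zero hquad
  rw [discrim] at hdisc
  have hcs : (mink y v) ^ 2 ≤ mink v v * (c ^ 2 - 1) := by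
    rw [← huu, ← huv]; nlinarith [hdisc]
  have hQ : 0 ≤ mink v v := mink_tangent_nonneg x v hx hxv
  have hden : (0:ℝ) < 1 - c := by linarith
  have key : (mink y v / (1 - c)) ^ 2 ≤ mink v v := by
    rw [div_pow, div_le_iff₀ (by positivity)]
    have : (c ^ 2 - 1) ≤ (1 - c) ^ 2 := by nlinarith
    nlinarith [hcs, hQ]
  calc |mink y v / (1 - c)| = Real.sqrt ((mink y v / (1 - c)) ^ 2) := by
        rw [Real.sqrt_sq_eq_abs]
      _ ≤ Real.sqrt (mink v v) := Real.sqrt_le_sqrt key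
end
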